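/- For subspaces A₀, B₀, B₁, ..., Bₙ of a finite-dimensional vector space V (n ≥ 1), I(A₀;B₀) ≤ I(A₀;B₀|B₁) + I(A₀;B₁|B₂) + ⋯ + I(A₀;B_{n-1}|Bₙ) + I(B₀;Bₙ), where I(X;Y) = dim X + dim Y - dim(X+Y) and I(X;Y|T) = dim(X+T) + dim(Y+T) - dim(X+Y+T) - dim T. -/

import Mathlib

/-! Put `S = A₀ ∩ B₀`, so that `I(A₀;B₀) = dim S`. Each conditional term dominates a drop
`dim (S ∩ Bᵢ) - dim (S ∩ Bᵢ₊₁)`, because `(S ∩ Bᵢ) + Bᵢ₊₁` lies in `(A₀ + Bᵢ₊₁) ∩ (Bᵢ + Bᵢ₊₁)`.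
The drops telescope to `dim S - dim (S ∩ Bₙ)`, and `dim (S ∩ Bₙ) ≤ dim (B₀ ∩ Bₙ) = I(B₀;Bₙ)`. -/

open Module

noncomputable def condH {F V : Type*} [Field F] [AddCommGroup V] [Module F V]
    (X Y : Submodule F V) : ℤ :=
  (finrank F ↑(X ⊔ Y) : ℤ) - finrank F ↑Y

noncomputable def mutI {F V : Type*} [Field F] [AddCommGroup V] [Module F V]
    (X Y : Submodule F V) : ℤ :=
  (finrank F ↑X : ℤ) + finrank F ↑Y - finrank F ↑(X ⊔ Y)

noncomputable def condI {F V : Type*} [Field F] [AddCommGroup V] [Module F V]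
    (X Y T : Submodule F V) : ℤ :=
  (finrank F ↑(X ⊔ T) : ℤ) + finrank F ↑(Y ⊔ T) - finrank F ↑(X ⊔ Y ⊔ T) - finrank F ↑T

section

variable {F V : Type*} [Field F] [AddCommGroup V] [Module F V] [FiniteDimensional F V]

lemma Submodule.finrank_sup_add_finrank_inf_int (X Y : Submodule F V) :
    (finrank F ↑(X ⊔ Y) : ℤ) + finrank F ↑(X ⊓ Y) = finrank F ↑X + finrank F ↑Y := by
  exact_mod_cast Submodule.finrank_sup_add_finrank_inf_eq X Y

lemma Submodule.finrank_mono_int {X Y : Submodule F V} (h : X ≤ Y) :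
    (finrank F ↑X : ℤ) ≤ finrank F ↑Y := by
  exact_mod_cast Submodule.finrank_mono h

lemma mutI_eq_finrank_inf (X Y : Submodule F V) : mutI X Y = finrank F ↑(X ⊓ Y) := by
  have := Submodule.finrank_sup_add_finrank_inf_int X Y
  unfold mutI
  linarith

lemma condI_eq_finrank_inf_sub (X Y T : Submodule F V) :
    condI X Y T = finrank F ↑((X ⊔ T) ⊓ (Y ⊔ T)) - finrank F ↑T := by
  have hsup : (X ⊔ T) ⊔ (Y ⊔ T) = X ⊔ Y ⊔ T := by
    rw [sup_sup_sup_comm, sup_idem]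
  have := Submodule.finrank_sup_add_finrank_inf_int (X ⊔ T) (Y ⊔ T)
  rw [hsup] at this
  unfold condI
  linarith

lemma finrank_inf_sub_finrank_inf_le_condI {S A : Submodule F V} (hS : S ≤ A)
    (X T : Submodule F V) :
    (finrank F ↑(S ⊓ X) : ℤ) - finrank F ↑(S ⊓ T) ≤ condI A X T := by
  have hle : (S ⊓ X) ⊔ T ≤ (A ⊔ T) ⊓ (X ⊔ T) :=
    sup_le (le_inf (inf_le_left.trans (hS.trans le_sup_left)) (inf_le_right.trans le_sup_left))
      (le_inf le_sup_right le_sup_right)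
  have hST : S ⊓ X ⊓ T ≤ S ⊓ T := inf_le_inf_right T inf_le_left
  have := Submodule.finrank_sup_add_finrank_inf_int (S ⊓ X) T
  have := Submodule.finrank_mono_int hle
  have := Submodule.finrank_mono_int hST
  rw [condI_eq_finrank_inf_sub]
  linarith

lemma finrank_inf_sub_finrank_inf_le_sum_condI {S A : Submodule F V} (hS : S ≤ A)
    (B : ℕ → Submodule F V) (n : ℕ) :
    (finrank F ↑(S ⊓ B 0) : ℤ) - finrank F ↑(S ⊓ B n) ≤
      ∑ i ∈ Finset.range n, condI A (B i) (B (i + 1)) := by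
  rw [← Finset.sum_range_sub' (fun i => (finrank F ↑(S ⊓ B i) : ℤ))]
  exact Finset.sum_le_sum fun i _ => finrank_inf_sub_finrank_inf_le_condI hS _ _

end

theorem stmt10_general {F V : Type*} [Field F] [AddCommGroup V] [Module F V] [FiniteDimensional F V]
    (n : ℕ) (A : Submodule F V) (B : ℕ → Submodule F V) :
    mutI A (B 0) ≤
      (∑ i ∈ Finset.range n, condI A (B i) (B (i + 1))) + mutI (B 0) (B n) := by
  have htel := finrank_inf_sub_finrank_inf_le_sum_condI (inf_le_left : A ⊓ B 0 ≤ A) B n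
  have hSB : A ⊓ B 0 ⊓ B n ≤ B 0 ⊓ B n := inf_le_inf_right (B n) inf_le_right
  rw [inf_assoc, inf_idem] at htel
  rw [mutI_eq_finrank_inf, mutI_eq_finrank_inf]
  linarith [Submodule.finrank_mono_int hSB]

theorem stmt10 {F V : Type*} [Field F] [AddCommGroup V] [Module F V] [FiniteDimensional F V]
    (n : ℕ) (hn : 1 ≤ n) (A : Submodule F V) (B : ℕ → Submodule F V) :
    mutI A (B 0) ≤
      (∑ i ∈ Finset.range n, condI A (B i) (B (i + 1))) + mutI (B 0) (B n) :=
  stmt10_general n A B
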